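/- For every integer n ≥ 7, the strong prism over the cycle satisfies μ(C_n ⊠ P_2) = n. -/

import Mathlib

open SimpleGraph

/-- Vertices `x` and `y` are `X`-visible in `G`: some shortest `x,y`-path has
no internal vertex in `X`. -/
def Visible {V : Type*} (G : SimpleGraph V) (X : Set V) (x y : V) : Prop :=
  ∃ p : G.Walk x y, p.length = G.dist x y ∧ ∀ v ∈ p.support, v ∈ X → v = x ∨ v = y

/-- `X` is a mutual-visibility set of `G`: every two vertices of `X` are `X`-visible. -/
def IsMVSet {V : Type*} (G : SimpleGraph V) (X : Set V) : Prop :=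
  ∀ x ∈ X, ∀ y ∈ X, Visible G X x y

/-- `X` is a total mutual-visibility set of `G`: every two vertices of `G` are
`X`-visible. -/
def IsTMVSet {V : Type*} (G : SimpleGraph V) (X : Set V) : Prop :=
  ∀ x y : V, Visible G X x y

/-- The mutual-visibility number of `G`: the maximum cardinality of a
mutual-visibility set. -/
noncomputable def mu {V : Type*} (G : SimpleGraph V) : ℕ :=
  sSup {n | ∃ X : Set V, IsMVSet G X ∧ X.ncard = n}

/-- The total mutual-visibility number of `G`: the maximum cardinality of a total
mutual-visibility set. -/
noncomputable def muT {V : Type*} (G : SimpleGraph V) : ℕ :=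
  sSup {n | ∃ X : Set V, IsTMVSet G X ∧ X.ncard = n}

/-- A feasible total mutual-visibility set: a total mutual-visibility set `S` such that
any two adjacent vertices of `S` have a common neighbor outside `S`. -/
def IsFeasibleTMVSet {V : Type*} (G : SimpleGraph V) (S : Set V) : Prop :=
  IsTMVSet G S ∧ ∀ x ∈ S, ∀ y ∈ S, G.Adj x y → ∃ z ∉ S, G.Adj x z ∧ G.Adj y z

/-- The strong product of two simple graphs. -/
def strongProd {α β : Type*} (G : SimpleGraph α) (H : SimpleGraph β) :
    SimpleGraph (α × β) where
  Adj x y := (G.Adj x.1 y.1 ∧ x.2 = y.2) ∨ (x.1 = y.1 ∧ H.Adj x.2 y.2) ∨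
    (G.Adj x.1 y.1 ∧ H.Adj x.2 y.2)
  symm := by
    constructor
    rintro ⟨a, b⟩ ⟨c, d⟩ (⟨h1, h2⟩ | ⟨h1, h2⟩ | ⟨h1, h2⟩)
    · exact Or.inl ⟨h1.symm, h2.symm⟩
    · exact Or.inr (Or.inl ⟨h1.symm, h2.symm⟩)
    · exact Or.inr (Or.inr ⟨h1.symm, h2.symm⟩)
  loopless := by
    constructor
    rintro ⟨a, b⟩ (⟨h, _⟩ | ⟨_, h⟩ | ⟨h, _⟩)
    · exact G.ne_of_adj h rfl
    · exact H.ne_of_adj h rfl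
    · exact G.ne_of_adj h rfl

/-- The iterated (associative) strong product of a finite family of graphs:
two tuples are adjacent iff they are distinct and agree or are adjacent in every
coordinate. -/
def strongProdPi {k : ℕ} {V : Fin k → Type*} (G : ∀ i, SimpleGraph (V i)) :
    SimpleGraph (∀ i, V i) where
  Adj x y := x ≠ y ∧ ∀ i, x i = y i ∨ (G i).Adj (x i) (y i)
  symm := by
    constructor
    rintro x y ⟨hne, h⟩
    exact ⟨hne.symm, fun i => (h i).imp Eq.symm fun hh => hh.symm⟩
  loopless := ⟨fun x h => h.1 rfl⟩

/-- A universal vertex: adjacent to all other vertices. -/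
def IsUniversal {V : Type*} (G : SimpleGraph V) (v : V) : Prop :=
  ∀ u : V, u ≠ v → G.Adj v u

/-- A cut vertex: its removal disconnects the graph. -/
def IsCutVertex {V : Type*} (G : SimpleGraph V) (v : V) : Prop :=
  ¬ (G.induce ({v}ᶜ : Set V)).Preconnected

/-- An induced path: a path with no chords between its vertices. -/
def IsInducedPath {V : Type*} (G : SimpleGraph V) {u v : V} (p : G.Walk u v) : Prop :=
  p.IsPath ∧ ∀ a b : V, a ∈ p.support → b ∈ p.support → G.Adj a b → s(a, b) ∈ p.edges

/-- A block graph: a connected graph in which every pair of vertices is joined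
by a unique induced path. -/
def IsBlockGraph {V : Type*} (G : SimpleGraph V) : Prop :=
  G.Connected ∧ ∀ u v : V, ∃! p : G.Walk u v, IsInducedPath G p

/-- A convex set of vertices: every shortest path of `G` between two of its
vertices stays inside the set. -/
def IsConvexSet {V : Type*} (G : SimpleGraph V) (A : Set V) : Prop :=
  ∀ x ∈ A, ∀ y ∈ A, ∀ p : G.Walk x y, p.length = G.dist x y → ∀ v ∈ p.support, v ∈ A

/-- A cactus graph: a connected graph in which every edge lies in at most one cycle,
i.e. two cycles sharing an edge have the same edge set. -/
def IsCactus {V : Type*} (G : SimpleGraph V) : Prop :=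
  G.Connected ∧ ∀ (v : V) (p q : G.Walk v v), p.IsCycle → q.IsCycle →
    ∀ e, e ∈ p.edges → e ∈ q.edges → ∀ e', e' ∈ p.edges ↔ e' ∈ q.edges

/-- A cograph: obtained from a single vertex by repeatedly adding twins, i.e. there is
an enumeration of the vertices in which every vertex except the first is, at the
moment of its addition, a (true or false) twin of some earlier vertex in the induced
subgraph on the vertices added so far. -/
def IsCograph {V : Type*} (G : SimpleGraph V) : Prop :=
  ∃ l : List V, l.Nodup ∧ (∀ v : V, v ∈ l) ∧
    ∀ i : Fin l.length, (i : ℕ) ≠ 0 →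
      ∃ j : Fin l.length, (j : ℕ) < (i : ℕ) ∧
        ∀ z ∈ l.take ((i : ℕ) + 1), z ≠ l.get i → z ≠ l.get j →
          (G.Adj (l.get i) z ↔ G.Adj (l.get j) z)

/-- An enabling vertex: a vertex `v` adjacent to every vertex `u` of `G - v` whose
degree in `G - v` is less than `n(G) - 2`. -/
def IsEnabling {V : Type*} [Fintype V] (G : SimpleGraph V) (v : V) : Prop :=
  ∀ u : V, u ≠ v → (G.neighborSet u \ {v}).ncard < Fintype.card V - 2 → G.Adj v u

/-!
In `C_n ⊠ P_2` two vertices in different columns are at the distance of their columns in `C_n`,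
and every shortest path projects onto a geodesic of `C_n`. Hence a row is a mutual-visibility
set: two of its vertices see each other along a geodesic running in the other row.
Conversely, a full column strictly inside a geodesic between two vertices of a
mutual-visibility set `X` would block it. For `n ≥ 7` this forbids a full column `a` with
occupied columns `a - 1` and `a + 1`, or `a + 1` and `a - 2`, which gives an injection from
full columns into empty ones; hence `|X| = #occupied + #full ≤ n`.
-/

section Visibility

variable {V : Type*} {G : SimpleGraph V} {X : Set V} {x y : V}

lemma visible_self (G : SimpleGraph V) (X : Set V) (x : V) : Visible G X x x :=
  ⟨.nil, by simp, by simp⟩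

lemma visible_of_adj (h : G.Adj x y) : Visible G X x y :=
  ⟨.cons h .nil, by simp [dist_eq_one_iff_adj.mpr h], by simp⟩

end Visibility

section StrongProduct

variable {α β : Type*} {G : SimpleGraph α} {H : SimpleGraph β}

lemma strongProd_adj_of_adj_left {a b : α} {i j : β} (h : G.Adj a b) (hij : i = j ∨ H.Adj i j) :
    (strongProd G H).Adj (a, i) (b, j) :=
  hij.elim (fun e => Or.inl ⟨h, e⟩) (fun e => Or.inr (Or.inr ⟨h, e⟩))

lemma strongProd_adj_fst {x y : α × β} (h : (strongProd G H).Adj x y) :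
    G.Adj x.1 y.1 ∨ x.1 = y.1 := by
  rcases h with ⟨h, -⟩ | ⟨h, -⟩ | ⟨h, -⟩ <;> tauto

lemma exists_walk_fst_of_strongProd_walk {x y : α × β} (p : (strongProd G H).Walk x y) :
    ∃ q : G.Walk x.1 y.1, q.length ≤ p.length ∧ q.support ⊆ p.support.map Prod.fst := by
  induction p with
  | nil => exact ⟨.nil, by simp, by simp⟩
  | @cons x z y h p ih =>
    obtain ⟨q, hlen, hsupp⟩ := ih
    rcases strongProd_adj_fst h with h | h
    · refine ⟨.cons h q, by simpa using hlen, ?_⟩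
      simpa using List.cons_subset_cons _ hsupp
    · refine ⟨q.copy h.symm rfl, by simp; omega, ?_⟩
      simp only [Walk.support_copy, Walk.support_cons, List.map_cons]
      exact fun v hv => List.mem_cons_of_mem _ (hsupp hv)

lemma dist_fst_le_length_of_strongProd_walk {x y : α × β} (p : (strongProd G H).Walk x y) :
    G.dist x.1 y.1 ≤ p.length := by
  obtain ⟨q, hlen, -⟩ := exists_walk_fst_of_strongProd_walk p
  exact (dist_le q).trans hlen

lemma exists_strongProd_walk_of_walk {a b : α} (q : G.Walk a b) (hq : ¬q.Nil) (i j : β)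
    (hij : i = j ∨ H.Adj i j) :
    ∃ p : (strongProd G H).Walk (a, i) (b, j),
      p.length = q.length ∧ ∀ v ∈ p.support, v = (b, j) ∨ v.2 = i := by
  induction q with
  | nil => exact absurd Walk.Nil.nil hq
  | @cons a c b h q ih =>
    by_cases hnil : q.Nil
    · obtain rfl := hnil.eq
      refine ⟨.cons (strongProd_adj_of_adj_left h hij) .nil, by simp [hnil.length_eq_zero], ?_⟩
      simp
    · obtain ⟨p, hlen, hsupp⟩ := ih hnil
      refine ⟨.cons (strongProd_adj_of_adj_left h (Or.inl rfl)) p, by simp [hlen], ?_⟩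
      simpa using hsupp

lemma dist_strongProd_of_ne {a b : α} (hab : a ≠ b) (hr : G.Reachable a b) {i j : β}
    (hij : i = j ∨ H.Adj i j) : (strongProd G H).dist (a, i) (b, j) = G.dist a b := by
  obtain ⟨q, hq⟩ := hr.exists_walk_length_eq_dist
  obtain ⟨p, hlen, -⟩ := exists_strongProd_walk_of_walk q (Walk.not_nil_of_ne hab) i j hij
  obtain ⟨p', hp'⟩ := p.reachable.exists_walk_length_eq_dist
  refine le_antisymm ((dist_le p).trans (hlen.trans hq).le) ?_
  rw [← hp']
  exact dist_fst_le_length_of_strongProd_walk p'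

theorem isMVSet_row (hG : G.Preconnected) {i j : β} (hij : H.Adj i j) :
    IsMVSet (strongProd G H) {v | v.2 = i} := by
  rintro ⟨a, i'⟩ (hi : i' = i) ⟨b, i''⟩ (hi' : i'' = i)
  subst i' i''
  by_cases hab : a = b
  · subst hab
    exact visible_self _ _ _
  obtain ⟨q, hq⟩ := (hG a b).exists_walk_length_eq_dist
  cases q with
  | nil => exact absurd rfl hab
  | @cons _ c _ h q =>
    by_cases hnil : q.Nil
    · obtain rfl := hnil.eq
      exact visible_of_adj (strongProd_adj_of_adj_left h (Or.inl rfl))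
    -- leave row `i` at once and return to it only at the last step
    obtain ⟨p, hlen, hsupp⟩ := exists_strongProd_walk_of_walk q hnil j i (Or.inr hij.symm)
    refine ⟨.cons (strongProd_adj_of_adj_left h (Or.inr hij)) p, ?_, ?_⟩
    · rw [dist_strongProd_of_ne hab (hG a b) (Or.inl rfl), ← hq]
      simp [hlen]
    · intro v hv hvi
      rw [Walk.support_cons, List.mem_cons] at hv
      rcases hv with hv | hv
      · exact Or.inl hv
      · exact Or.inr ((hsupp v hv).resolve_right fun hvj => hij.ne (hvi.symm.trans hvj))

end StrongProduct

section Cycle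

open scoped Fin.CommRing

variable {n : ℕ} [NeZero n]

lemma cycleGraph_adj_add_one (hn : 2 ≤ n) (a : Fin n) : (cycleGraph n).Adj a (a + 1) := by
  rw [cycleGraph_adj', add_sub_cancel_left, Fin.val_one', Nat.mod_eq_of_lt hn]
  exact Or.inr rfl

lemma eq_add_one_or_eq_sub_one_of_cycleGraph_adj {a b : Fin n} (h : (cycleGraph n).Adj a b) :
    b = a + 1 ∨ b = a - 1 := by
  have val_one (c : Fin n) (hc : c.val = 1) : c = 1 := by
    ext
    rw [hc, Fin.val_one', Nat.mod_eq_of_lt (hc ▸ c.isLt)]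
  rcases (cycleGraph_adj'.mp h) with h | h
  · right; rw [← val_one _ h]; ring
  · left; rw [← val_one _ h]; ring

lemma exists_cycleGraph_walk_add (hn : 2 ≤ n) (a : Fin n) (k : ℕ) :
    ∃ q : (cycleGraph n).Walk a (a + k), q.length = k := by
  induction k with
  | zero => exact ⟨Walk.nil.copy rfl (by simp), by simp⟩
  | succ k ih =>
    obtain ⟨q, hq⟩ := ih
    refine ⟨(q.concat (cycleGraph_adj_add_one hn _)).copy rfl (by push_cast; ring), ?_⟩
    simp [hq]

lemma exists_int_eq_add_of_cycleGraph_walk {a b : Fin n} (q : (cycleGraph n).Walk a b) :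
    ∃ s : ℤ, |s| ≤ q.length ∧ b = a + s := by
  induction q with
  | nil => exact ⟨0, by simp, by simp⟩
  | @cons a c b h q ih =>
    obtain ⟨s, hs, rfl⟩ := ih
    rcases eq_add_one_or_eq_sub_one_of_cycleGraph_adj h with rfl | rfl
    · refine ⟨s + 1, ?_, by push_cast; ring⟩
      have := abs_add_le s 1
      simp only [Walk.length_cons, Nat.cast_add, Nat.cast_one, abs_one] at this ⊢
      omega
    · refine ⟨s - 1, ?_, by push_cast; ring⟩
      have := abs_sub_le s 0 1
      simp only [Walk.length_cons, Nat.cast_add, Nat.cast_one, abs_one, sub_zero,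
        zero_sub, abs_neg] at this ⊢
      omega

-- A walk shorter than the displacement `k` would have to wind around the cycle.
lemma le_length_of_cycleGraph_walk {a b : Fin n} {k : ℕ} (q : (cycleGraph n).Walk a b)
    (hb : b = a + k) (h : k + q.length < n) : k ≤ q.length := by
  obtain ⟨s, hs, hsb⟩ := exists_int_eq_add_of_cycleGraph_walk q
  have hcast : ((k : ℤ) : Fin n) = (s : Fin n) := by
    rw [Int.cast_natCast]; exact add_left_cancel (hb.symm.trans hsb)
  have hdvd : (n : ℤ) ∣ s - k :=
    Int.ModEq.dvd ((CharP.intCast_eq_intCast (Fin n) n).mp hcast)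
  have hsk : s - k = 0 := Int.eq_zero_of_abs_lt_dvd hdvd (by
    have := abs_sub_le s 0 k
    simp only [sub_zero, zero_sub, abs_neg, Nat.abs_cast] at this
    omega)
  have : |s| = k := by rw [sub_eq_zero.mp hsk, Nat.abs_cast]
  omega

lemma cycleGraph_dist_add (a : Fin n) {k : ℕ} (hk : 2 * k ≤ n) :
    (cycleGraph n).dist a (a + k) = k := by
  rcases Nat.eq_zero_or_pos k with rfl | hk0
  · simp
  obtain ⟨q, hq⟩ := exists_cycleGraph_walk_add (by omega) a k
  obtain ⟨p, hp⟩ := q.reachable.exists_walk_length_eq_dist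
  have hle : (cycleGraph n).dist a (a + k) ≤ k := (dist_le q).trans hq.le
  by_contra hne
  have := le_length_of_cycleGraph_walk p rfl (by omega)
  omega

lemma add_mem_support_of_cycleGraph_walk {b e : Fin n} (q : (cycleGraph n).Walk b e)
    {d : ℕ} (he : e = b + d) (hq : q.length = d) (hd : 2 * d < n) {t : ℕ} (ht : t ≤ d) :
    b + t ∈ q.support := by
  induction q generalizing d t with
  | nil =>
    obtain rfl : t = 0 := by simp at hq; omega
    simp
  | @cons b c e h q ih =>
    obtain ⟨d, rfl⟩ : ∃ d', d = d' + 1 := ⟨q.length, by simp at hq; omega⟩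
    rcases Nat.eq_zero_or_pos t with rfl | ht0
    · simp
    obtain ⟨t, rfl⟩ : ∃ t', t = t' + 1 := ⟨t - 1, by omega⟩
    have hq' : q.length = d := by simpa using hq
    rcases eq_add_one_or_eq_sub_one_of_cycleGraph_adj h with rfl | rfl
    · have := ih (d := d) (t := t) (by rw [he]; push_cast; ring) hq' (by omega) (by omega)
      rw [Walk.support_cons]
      exact List.mem_cons_of_mem _ (by convert this using 1; push_cast; ring)
    · -- a step backwards leaves too little length to reach `b + (d + 1)`
      have := le_length_of_cycleGraph_walk q (k := d + 2) (by rw [he]; push_cast; ring)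
        (by omega)
      omega

end Cycle

section Counting

lemma ncard_eq_ncard_add_ncard_of_fin_two {α : Type*} [Finite α] (X : Set (α × Fin 2)) :
    X.ncard = {a | (a, 0) ∈ X}.ncard + {a | (a, 1) ∈ X}.ncard := by
  have hX : X = (·, 0) '' {a | (a, 0) ∈ X} ∪ (·, 1) '' {a | (a, 1) ∈ X} := by
    ext ⟨a, i⟩
    fin_cases i <;> simp
  nth_rewrite 1 [hX]
  rw [Set.ncard_union_eq (by simp [Set.disjoint_left]),
    Set.ncard_image_of_injective _ (by simp [Function.Injective]),
    Set.ncard_image_of_injective _ (by simp [Function.Injective])]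

lemma ncard_le_ncard_compl_of_spaced {R : Type*} [AddCommGroupWithOne R] [Finite R]
    {F O : Set R} (hFO : F ⊆ O) (h₁ : ∀ a ∈ F, a - 1 ∈ O → a + 1 ∉ O)
    (h₂ : ∀ a ∈ F, a + 1 ∈ O → a - 2 ∉ O) : F.ncard ≤ Oᶜ.ncard := by
  classical
  have two_eq (a b : R) (h : a - 1 = b + 1) : b = a - 2 := by
    rw [← one_add_one_eq_two, ← sub_sub, h, add_sub_cancel_right]
  refine Set.ncard_le_ncard_of_injOn (fun a => if a + 1 ∈ O then a - 1 else a + 1) ?_ ?_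
    (Set.toFinite _)
  · intro a ha
    by_cases h : a + 1 ∈ O
    · simpa [h] using fun h' => h₁ a ha h' h
    · simp [h]
  · intro a ha b hb hab
    by_cases h : a + 1 ∈ O <;> by_cases h' : b + 1 ∈ O <;>
      simp only [h, h', if_true, if_false] at hab
    · exact sub_left_injective hab
    · exact absurd (two_eq a b hab ▸ hFO hb) (h₂ a ha h)
    · exact absurd (two_eq b a hab.symm ▸ hFO ha) (h₂ b hb h')
    · exact add_left_injective _ hab

lemma ncard_row {α β : Type*} [Finite α] (i : β) :
    {v : α × β | v.2 = i}.ncard = Nat.card α := by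
  have : {v : α × β | v.2 = i} = (·, i) '' Set.univ := by
    ext ⟨a, j⟩
    simp [eq_comm]
  rw [this, Set.ncard_image_of_injective _ (by simp [Function.Injective]), Set.ncard_univ]

end Counting

section CyclePrism

open scoped Fin.CommRing

variable {n : ℕ} [NeZero n]

lemma IsMVSet.exists_notMem_of_between {β : Type*} {H : SimpleGraph β}
    {X : Set (Fin n × β)} (hX : IsMVSet (strongProd (cycleGraph n) H) X) {b c m : Fin n}
    {i j : β} (hij : i = j ∨ H.Adj i j) (hbi : (b, i) ∈ X) (hcj : (c, j) ∈ X) {d t : ℕ}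
    (hc : c = b + d) (hm : m = b + t) (ht : 0 < t) (htd : t < d) (hd : 2 * d < n) :
    ∃ r, (m, r) ∉ X := by
  have cast_inj {k l : ℕ} (hk : k < n) (hl : l < n) (h : b + k = b + l) : k = l :=
    CharP.natCast_injOn_Iio (Fin n) n hk hl (add_left_cancel h)
  have hbc : b ≠ c := fun h => by
    have := cast_inj (k := 0) (l := d) (by omega) (by omega) (by simpa [← hc])
    omega
  obtain ⟨p, hp, hsupp⟩ := hX _ hbi _ hcj
  have hlen : p.length = d := by
    rw [hp, dist_strongProd_of_ne hbc (cycleGraph_preconnected b c) hij, hc,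
      cycleGraph_dist_add b (by omega)]
  obtain ⟨q, hq, hqp⟩ := exists_walk_fst_of_strongProd_walk p
  have hql : q.length = d :=
    le_antisymm (hq.trans hlen.le) (le_length_of_cycleGraph_walk q hc (by omega))
  obtain ⟨w, hw, hwm⟩ :=
    List.mem_map.mp (hqp (add_mem_support_of_cycleGraph_walk q hc hql hd htd.le))
  refine ⟨w.2, fun hwX => ?_⟩
  rw [hm, ← hwm] at hwX
  rcases hsupp w hw hwX with rfl | rfl
  · have := cast_inj (k := t) (l := 0) (by omega) (by omega) (by simpa using hwm.symm)
    omega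
  · have := cast_inj (k := t) (l := d) (by omega) (by omega) (hwm.symm.trans hc)
    omega

lemma pathGraph_two_eq_or_adj (i j : Fin 2) : i = j ∨ (pathGraph 2).Adj i j := by
  rw [pathGraph_two_eq_top]
  exact eq_or_ne i j

theorem IsMVSet.ncard_le_of_cycleGraph_strongProd_pathGraph_two (hn : 7 ≤ n)
    {X : Set (Fin n × Fin 2)} (hX : IsMVSet (strongProd (cycleGraph n) (pathGraph 2)) X) :
    X.ncard ≤ n := by
  set A : Fin 2 → Set (Fin n) := fun i => {a | (a, i) ∈ X}
  have blocked {b c m : Fin n} (d t : ℕ) (hc : c = b + d) (hm : m = b + t) (ht : 0 < t)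
      (htd : t < d) (hd : 2 * d < n) (hbX : b ∈ A 0 ∪ A 1) (hcX : c ∈ A 0 ∪ A 1)
      (hmX : m ∈ A 0 ∩ A 1) : False := by
    obtain ⟨i, hi⟩ : ∃ i, (b, i) ∈ X := hbX.elim (⟨0, ·⟩) (⟨1, ·⟩)
    obtain ⟨j, hj⟩ : ∃ j, (c, j) ∈ X := hcX.elim (⟨0, ·⟩) (⟨1, ·⟩)
    obtain ⟨r, hr⟩ :=
      hX.exists_notMem_of_between (pathGraph_two_eq_or_adj i j) hi hj hc hm ht htd hd
    fin_cases r
    exacts [hr hmX.1, hr hmX.2]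
  have h₁ : ∀ a ∈ A 0 ∩ A 1, a - 1 ∈ A 0 ∪ A 1 → a + 1 ∉ A 0 ∪ A 1 :=
    fun a ha hb hc => blocked 2 1 (by push_cast; ring) (by push_cast; ring) (by omega)
      (by omega) (by omega) hb hc ha
  have h₂ : ∀ a ∈ A 0 ∩ A 1, a + 1 ∈ A 0 ∪ A 1 → a - 2 ∉ A 0 ∪ A 1 :=
    fun a ha hc hb => blocked 3 2 (by push_cast; ring) (by push_cast; ring) (by omega)
      (by omega) (by omega) hb hc ha
  calc X.ncard = (A 0 ∪ A 1).ncard + (A 0 ∩ A 1).ncard := by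
        rw [ncard_eq_ncard_add_ncard_of_fin_two, Set.ncard_union_add_ncard_inter]
    _ ≤ (A 0 ∪ A 1).ncard + (A 0 ∪ A 1)ᶜ.ncard :=
        Nat.add_le_add_left (ncard_le_ncard_compl_of_spaced inf_le_sup h₁ h₂) _
    _ = n := by rw [Set.ncard_add_ncard_compl, Nat.card_eq_fintype_card, Fintype.card_fin]

end CyclePrism

theorem stmt_17 (n : ℕ) (hn : 7 ≤ n) :
    mu (strongProd (SimpleGraph.cycleGraph n) (SimpleGraph.pathGraph 2)) = n := by
  have : NeZero n := ⟨by omega⟩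
  refine IsGreatest.csSup_eq ⟨⟨{v | v.2 = 0}, ?_, ?_⟩, ?_⟩
  · exact isMVSet_row cycleGraph_preconnected (j := 1) (by simp [pathGraph_two_eq_top])
  · rw [ncard_row, Nat.card_eq_fintype_card, Fintype.card_fin]
  · rintro _ ⟨X, hX, rfl⟩
    exact hX.ncard_le_of_cycleGraph_strongProd_pathGraph_two hn
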